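/- arXiv:1707.05186 — 4 statements merged into one kernel-verified Lean document; each statement's English description precedes it below -/
import Mathlib

section
/- Let G be an n-vertex graph with maximum degree at most Δ. Then for every k ≥ 1, the number of vertex subsets S of G with |S| = k and G[S] connected is at most n·(eΔ)^{k-1}. -/
/-!
Number the neighbours of every vertex injectively by `Fin Δ` ("ports"). A breadth-first search
inside a connected set `S` with `#S = r + 1`, started at `v ∈ S`, discovers each of the other `r`
vertices through a port of a vertex at one of the positions `0, …, r - 1` of the search order.
Replaying the search from `v` reconstructs `S` from the set of these `r` (position, port) pairs,
so there are at most `n · C(rΔ, r)` such sets; finally `C(rΔ, r) ≤ (rΔ)^r / r! ≤ (eΔ)^r`, as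
`r^r / r!` is a term of the series of `e^r`.
-/

open Finset Function

namespace SimpleGraph

variable {V : Type*} {G : SimpleGraph V} {Δ : ℕ}

theorem Connected.subset_of_forall_adj_mem {s t : Set V} (hs : (G.induce s).Connected) {v : V}
    (hvs : v ∈ s) (hvt : v ∈ t) (ht : ∀ x ∈ s, x ∈ t → ∀ y ∈ s, G.Adj x y → y ∈ t) :
    s ⊆ t := by
  intro w hw
  obtain ⟨p⟩ := hs.preconnected ⟨v, hvs⟩ ⟨w, hw⟩
  suffices ∀ a b (p : (G.induce s).Walk a b), (a : V) ∈ t → (b : V) ∈ t from this _ _ p hvt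
  intro a b p
  induction p with
  | nil => exact id
  | cons hab _ ih => exact fun ha => ih (ht _ (Subtype.prop _) ha _ (Subtype.prop _) hab)

theorem nonempty_neighborSet_embedding_fin [Finite V]
    (hΔ : ∀ v, (G.neighborSet v).ncard ≤ Δ) : Nonempty (∀ u, G.neighborSet u ↪ Fin Δ) := by
  classical
  have := Fintype.ofFinite V
  refine ⟨fun u => Classical.choice (Function.Embedding.nonempty_of_card_le ?_)⟩
  rw [Fintype.card_fin, ← Nat.card_eq_fintype_card, Nat.card_coe_set_eq]
  exact hΔ u

variable (e : ∀ u, G.neighborSet u ↪ Fin Δ)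

noncomputable def portNeighbor (u : V) (j : Fin Δ) : Option V :=
  (partialInv (e u) j).map Subtype.val

def portRow (A : Finset (ℕ × Fin Δ)) (m : ℕ) : Finset (Fin Δ) := univ.filter fun j => (m, j) ∈ A

noncomputable def portChildren (u : V) (F : Finset (Fin Δ)) : List V :=
  F.toList.filterMap (portNeighbor e u)

/-- Replays a breadth-first search from `v`: the vertex at position `m` of the list appends its
neighbours behind the ports in row `m` of `A`. -/
noncomputable def portDecode (v : V) (A : Finset (ℕ × Fin Δ)) : ℕ → List V
  | 0 => [v]
  | m + 1 =>
    let L := portDecode v A m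
    L ++ match L[m]? with
      | some u => portChildren e u (portRow A m)
      | none => []

variable {e}

theorem portNeighbor_eq_some {u w : V} {j : Fin Δ} :
    portNeighbor e u j = some w ↔ ∃ h : G.Adj u w, e u ⟨w, h⟩ = j := by
  simp only [portNeighbor, Option.map_eq_some_iff, (e u).injective.isPartialInv _ _]
  exact ⟨fun ⟨⟨x, hx⟩, hj, hxw⟩ => hxw ▸ ⟨hx, hj⟩, fun ⟨h, hj⟩ => ⟨⟨w, h⟩, hj, rfl⟩⟩

theorem portNeighbor_self {u w : V} (h : G.Adj u w) : portNeighbor e u (e u ⟨w, h⟩) = some w :=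
  portNeighbor_eq_some.mpr ⟨h, rfl⟩

theorem mem_portChildren {u w : V} {F : Finset (Fin Δ)} :
    w ∈ portChildren e u F ↔ ∃ j ∈ F, portNeighbor e u j = some w := by
  simp [portChildren]

theorem mem_portChildren_iff_of_forall_mem_iff {u w : V} {F : Finset (Fin Δ)} {P : V → Prop}
    (hF : ∀ j, j ∈ F ↔ ∃ x, P x ∧ portNeighbor e u j = some x) :
    w ∈ portChildren e u F ↔ P w ∧ G.Adj u w := by
  simp only [mem_portChildren, hF]
  constructor
  · rintro ⟨j, ⟨x, hx, hjx⟩, hjw⟩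
    obtain rfl : x = w := Option.some_injective _ (hjx.symm.trans hjw)
    exact ⟨hx, (portNeighbor_eq_some.mp hjw).1⟩
  · rintro ⟨hw, hadj⟩
    exact ⟨_, ⟨w, hw, portNeighbor_self hadj⟩, portNeighbor_self hadj⟩

theorem nodup_portChildren (u : V) (F : Finset (Fin Δ)) : (portChildren e u F).Nodup := by
  refine F.nodup_toList.filterMap fun j j' w hj hj' => ?_
  obtain ⟨_, rfl⟩ := portNeighbor_eq_some.mp hj
  obtain ⟨_, rfl⟩ := portNeighbor_eq_some.mp hj'
  rfl

theorem length_portChildren {u : V} {F : Finset (Fin Δ)}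
    (hF : ∀ j ∈ F, (portNeighbor e u j).isSome) : (portChildren e u F).length = #F := by
  rw [portChildren, List.length_filterMap_eq_countP, List.countP_eq_length.mpr, length_toList]
  simpa using hF

theorem portDecode_succ (v : V) (A : Finset (ℕ × Fin Δ)) (m : ℕ) :
    portDecode e v A (m + 1) = portDecode e v A m ++
      match (portDecode e v A m)[m]? with
      | some u => portChildren e u (portRow A m)
      | none => [] := rfl

theorem portDecode_congr {v : V} {A A' : Finset (ℕ × Fin Δ)} {m : ℕ}
    (h : ∀ p < m, portRow A p = portRow A' p) : portDecode e v A m = portDecode e v A' m := by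
  induction m with
  | zero => rfl
  | succ m ih =>
    rw [portDecode_succ, portDecode_succ, ih fun p hp => h p (by omega), h m (by omega)]

theorem mem_portDecode_self (v : V) (A : Finset (ℕ × Fin Δ)) : ∀ m, v ∈ portDecode e v A m
  | 0 => List.mem_singleton_self v
  | m + 1 => by rw [portDecode_succ]; exact List.mem_append_left _ (mem_portDecode_self v A m)

/-- The state of a breadth-first search inside `S` after the first `m` listed vertices have
been processed, having recorded the ports it used in `A`. -/
structure Explores (G : SimpleGraph V) (S : Finset V) (A : Finset (ℕ × Fin Δ)) (m : ℕ)
    (L : List V) : Prop where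
  subset_range : A ⊆ range m ×ˢ univ
  nodup : L.Nodup
  subset : ∀ w ∈ L, w ∈ S
  length_eq : L.length = #A + 1
  closed : ∀ p (hp : p < L.length), p < m → ∀ w ∈ S, G.Adj L[p] w → w ∈ L

namespace Explores

variable {S : Finset V} {A : Finset (ℕ × Fin Δ)} {m : ℕ} {L : List V}

theorem succ_of_length_le (h : Explores G S A m L) (hlen : L.length ≤ m) :
    Explores G S A (m + 1) L :=
  ⟨h.subset_range.trans (product_subset_product_left (range_subset_range.mpr m.le_succ)),
    h.nodup, h.subset, h.length_eq, fun p hp _ => h.closed p hp (by omega)⟩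

theorem append_portChildren (h : Explores G S A m L) (hm : m < L.length) {F : Finset (Fin Δ)}
    (hF : ∀ j, j ∈ F ↔ ∃ w, (w ∈ S ∧ w ∉ L) ∧ portNeighbor e L[m] j = some w) :
    Explores G S (A ∪ {m} ×ˢ F) (m + 1) (L ++ portChildren e L[m] F) := by
  have hmem w := mem_portChildren_iff_of_forall_mem_iff (w := w) hF
  have hdisj : Disjoint A ({m} ×ˢ F) := Finset.disjoint_left.mpr fun q hq hq' => by
    have := (mem_product.mp (h.subset_range hq)).1
    rw [mem_product, mem_singleton] at hq'
    simp [hq'.1] at this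
  constructor
  · refine union_subset (h.subset_range.trans ?_) ?_
    · exact product_subset_product_left (range_subset_range.mpr m.le_succ)
    · exact product_subset_product (by simp) (subset_univ F)
  · exact List.nodup_append.mpr ⟨h.nodup, nodup_portChildren _ _,
      fun a ha b hb hab => ((hmem b).mp hb).1.2 (hab ▸ ha)⟩
  · intro w hw
    rcases List.mem_append.mp hw with hw | hw
    exacts [h.subset w hw, ((hmem w).mp hw).1.1]
  · have hsome : ∀ j ∈ F, (portNeighbor e L[m] j).isSome := fun j hj => by
      obtain ⟨w, -, hw⟩ := (hF j).mp hj
      simp [hw]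
    rw [List.length_append, h.length_eq, card_union_of_disjoint hdisj, card_product,
      card_singleton, one_mul, length_portChildren hsome]
    ring
  · intro p hp hpm w hwS hadj
    by_cases hwL : w ∈ L
    · exact List.mem_append_left _ hwL
    obtain rfl | hpm := (Nat.lt_succ_iff_lt_or_eq.mp hpm).symm
    · rw [List.getElem_append_left hm] at hadj
      exact List.mem_append_right _ ((hmem w).mpr ⟨⟨hwS, hwL⟩, hadj⟩)
    · rw [List.getElem_append_left (hpm.trans hm)] at hadj
      exact absurd (h.closed p (hpm.trans hm) hpm w hwS hadj) hwL

theorem exists_succ {v : V} (h : Explores G S A m (portDecode e v A m)) :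
    ∃ A', Explores G S A' (m + 1) (portDecode e v A' (m + 1)) := by
  classical
  set L := portDecode e v A m with hL
  cases hu : L[m]? with
  | none =>
    refine ⟨A, ?_⟩
    rw [portDecode_succ, ← hL, hu, List.append_nil]
    exact h.succ_of_length_le (List.getElem?_eq_none_iff.mp hu)
  | some u =>
    obtain ⟨hm, rfl⟩ := List.getElem?_eq_some_iff.mp hu
    set F := univ.filter fun j => ∃ w, (w ∈ S ∧ w ∉ L) ∧ portNeighbor e L[m] j = some w
    have hmA : ∀ j, (m, j) ∉ A := fun j hj => by
      simpa using (mem_product.mp (h.subset_range hj)).1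
    have hrow : ∀ p < m, portRow (A ∪ {m} ×ˢ F) p = portRow A p := fun p hp => by
      ext j; simp [portRow, hp.ne']
    have hrowm : portRow (A ∪ {m} ×ˢ F) m = F := by
      ext j; simp [portRow, hmA]
    refine ⟨A ∪ {m} ×ˢ F, ?_⟩
    rw [portDecode_succ, portDecode_congr hrow, ← hL, hu, hrowm]
    exact h.append_portChildren hm fun j => by simp [F]

end Explores

theorem exists_explores {S : Finset V} {v : V} (hv : v ∈ S) :
    ∀ m, ∃ A, Explores G S A m (portDecode e v A m)
  | 0 => ⟨∅, empty_subset _, List.nodup_singleton v, fun _ hw => List.mem_singleton.mp hw ▸ hv,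
      rfl, fun _ _ h => (Nat.not_lt_zero _ h).elim⟩
  | m + 1 => (exists_explores hv m).elim fun _ h => h.exists_succ

theorem exists_portDecode_eq [DecidableEq V] {S : Finset V} (hS : (G.induce (S : Set V)).Connected)
    {v : V} (hv : v ∈ S) {r : ℕ} (hcard : #S = r + 1) :
    ∃ A ∈ (range r ×ˢ univ).powersetCard r, (portDecode e v A r).toFinset = S := by
  obtain ⟨A, h⟩ := exists_explores (e := e) hv r
  set L := portDecode e v A r
  have hcardL : #L.toFinset = L.length := List.toFinset_card_of_nodup h.nodup
  have hLS : L.toFinset ⊆ S := fun w hw => h.subset w (List.mem_toFinset.mp hw)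
  have hSL : S ⊆ L.toFinset := by
    by_cases hlen : r < L.length
    · exact (eq_of_subset_of_card_le hLS (by omega)).ge
    -- The search has stalled, so `L` is closed under adjacency inside `S`.
    · have := hS.subset_of_forall_adj_mem (t := {w | w ∈ L}) hv (mem_portDecode_self v A r) ?_
      · exact fun w hw => List.mem_toFinset.mpr (this hw)
      intro x _ hx y hy hxy
      obtain ⟨p, hp, rfl⟩ := List.getElem_of_mem hx
      exact h.closed p hp (by omega) y hy hxy
  have hLeq := Subset.antisymm hLS hSL
  have hlenA := h.length_eq
  exact ⟨A, mem_powersetCard.mpr ⟨h.subset_range, by rw [← hLeq] at hcard; omega⟩, hLeq⟩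

theorem ncard_induce_connected_le [Fintype V] (hΔ : ∀ v, (G.neighborSet v).ncard ≤ Δ) (r : ℕ) :
    {S : Finset V | #S = r + 1 ∧ (G.induce (S : Set V)).Connected}.ncard ≤
      Fintype.card V * (r * Δ).choose r := by
  classical
  obtain ⟨e⟩ := nonempty_neighborSet_embedding_fin hΔ
  set D : Finset (Finset V) := univ.biUnion fun v =>
    ((range r ×ˢ univ).powersetCard r).image fun A => (portDecode e v A r).toFinset
  have hD : {S : Finset V | #S = r + 1 ∧ (G.induce (S : Set V)).Connected} ⊆ D := by
    rintro S ⟨hcard, hS⟩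
    obtain ⟨v, hv⟩ := card_pos.mp (by omega : 0 < #S)
    obtain ⟨A, hA, hAS⟩ := exists_portDecode_eq hS hv hcard
    exact mem_biUnion.mpr ⟨v, mem_univ v, mem_image.mpr ⟨A, hA, hAS⟩⟩
  calc _ ≤ #D := by simpa using Set.ncard_le_ncard hD D.finite_toSet
    _ ≤ ∑ v : V, #(((range r ×ˢ univ).powersetCard r).image
          fun A => (portDecode e v A r).toFinset) := card_biUnion_le
    _ ≤ ∑ _v : V, (r * Δ).choose r := sum_le_sum fun v _ => card_image_le.trans (by simp)
    _ = Fintype.card V * (r * Δ).choose r := by simp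

end SimpleGraph

theorem Nat.choose_mul_le_exp_mul_pow (r Δ : ℕ) :
    ((r * Δ).choose r : ℝ) ≤ (Real.exp 1 * Δ) ^ r :=
  calc ((r * Δ).choose r : ℝ) ≤ ((r * Δ : ℕ) : ℝ) ^ r / r.factorial := Nat.choose_le_pow_div r _
    _ = (r : ℝ) ^ r / r.factorial * (Δ : ℝ) ^ r := by push_cast; ring
    _ ≤ Real.exp r * (Δ : ℝ) ^ r := by
      gcongr; exact Real.pow_div_factorial_le_exp _ r.cast_nonneg r
    _ = (Real.exp 1 * Δ) ^ r := by rw [mul_pow, ← Real.exp_one_pow]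

/-- In an n-vertex graph of maximum degree at most Δ, the number of vertex subsets of size k
inducing a connected subgraph is at most n·(eΔ)^{k-1}. -/
theorem stmt2 {V : Type} [Fintype V] (G : SimpleGraph V) (n Δ : ℕ)
    (hn : Fintype.card V = n)
    (hΔ : ∀ v : V, (G.neighborSet v).ncard ≤ Δ) (k : ℕ) (hk : 1 ≤ k) :
    (Set.ncard {S : Finset V | S.card = k ∧ (G.induce (S : Set V)).Connected} : ℝ)
      ≤ n * (Real.exp 1 * Δ) ^ (k - 1) := by
  obtain ⟨r, rfl⟩ : ∃ r, k = r + 1 := ⟨k - 1, by omega⟩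
  rw [Nat.add_sub_cancel]
  calc _ ≤ ((n * (r * Δ).choose r : ℕ) : ℝ) := by
        exact_mod_cast hn ▸ G.ncard_induce_connected_le hΔ r
    _ ≤ n * (Real.exp 1 * Δ) ^ r := by
        push_cast
        gcongr
        exact Nat.choose_mul_le_exp_mul_pow r Δ
end

section
/- (Combinatorial Nullstellensatz, nonvanishing form) Let F be a field and f ∈ F[x₁,…,x_n] a polynomial of total degree d. Suppose the coefficient of the monomial x₁^{μ₁}⋯x_n^{μ_n} in f is nonzero, where μ₁ + ⋯ + μ_n = d. If S₁, …, S_n ⊆ F are finite sets with |S_i| ≥ μ_i + 1 for each i, then there exists a point s ∈ S₁ × ⋯ × S_n with f(s) ≠ 0. -/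
/-- Combinatorial Nullstellensatz (nonvanishing form). -/
theorem stmt12 {F : Type} [Field F] (n : ℕ) (f : MvPolynomial (Fin n) F) (d : ℕ)
    (hd : f.totalDegree = d) (μ : Fin n → ℕ) (hμ : ∑ i, μ i = d)
    (hcoeff : f.coeff (Finsupp.equivFunOnFinite.symm μ) ≠ 0)
    (S : Fin n → Finset F) (hS : ∀ i, μ i + 1 ≤ (S i).card) :
    ∃ s : Fin n → F, (∀ i, s i ∈ S i) ∧ MvPolynomial.eval s f ≠ 0 := by
  refine MvPolynomial.combinatorial_nullstellensatz_exists_eval_nonzero f _ hcoeff ?_ S hS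
  rw [hd, ← hμ, Finsupp.degree_eq_sum]
  simp
end

section
/- Let v₁, …, v_{ℓ−1} ∈ F^{ℓ−1} be linearly independent vectors over an infinite field F (or over ℚ), and let φ : F^r → F^ℓ be a map of the form φ(x) = (x^{δ₁}, …, x^{δ_ℓ}) given by distinct monomials x^{δ_j} with multi-indices δ₁, …, δ_ℓ all of the same total weighted degree m (with respect to positive integer weights h). Given ℓ−1 points ν₁,…,ν_{ℓ−1} ∈ ℕ^r such that the truncations (φ(ν_i))|_{ℓ−1} extend the v_i to an invertible (ℓ−1)×(ℓ−1) matrix, there exists ν_ℓ ∈ ℕ^r, with each coordinate ν_{ℓ,i} ∈ {1, …, δ_{ℓ,i}h_i + 1}, such that the ℓ×ℓ matrix with columns φ(ν₁),…,φ(ν_ℓ) is invertible. -/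
/-!
Replace the last point by the generic point `X`: the determinant becomes a polynomial
`P = ∑ᵢ ± det(minorᵢ) X^{eᵢ}` (Laplace expansion along that column). Its monomials are
distinct because the exponent vectors are, none has degree above that of `X^{e_last}`, and
the coefficient of `X^{e_last}` is the given nonzero minor. The Combinatorial Nullstellensatz
then finds a point of the box `∏ₜ {1, …, e_last,t + 1}` where `P` does not vanish.
-/

open Finset MvPolynomial

def monomialMatrix {R ι κ σ : Type*} [CommMonoid R] [Fintype σ] (e : ι → σ → ℕ) (x : κ → σ → R) :
    Matrix ι κ R :=
  Matrix.of fun i j => ∏ t, x j t ^ e i t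

section

variable {R S ι κ σ : Type*} [Fintype σ]

theorem monomialMatrix_map [CommSemiring R] [CommSemiring S] (f : R →+* S) (e : ι → σ → ℕ)
    (x : κ → σ → R) :
    (monomialMatrix e x).map f = monomialMatrix e fun j t => f (x j t) := by
  ext i j
  simp [monomialMatrix]

theorem prod_X_pow_eq_monomial_equivFunOnFinite [CommSemiring R] (d : σ → ℕ) :
    ∏ t, (X t : MvPolynomial σ R) ^ d t = monomial (Finsupp.equivFunOnFinite.symm d) 1 := by
  rw [← prod_X_pow_eq_monomial]
  exact (Finsupp.prod_fintype (Finsupp.equivFunOnFinite.symm d)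
    (fun t k => (X t : MvPolynomial σ R) ^ k) fun _ => pow_zero _).symm

end

noncomputable def extensionPolynomial {R σ : Type*} [CommRing R] [Fintype σ] {n : ℕ}
    (e : Fin (n + 1) → σ → ℕ) (x : Fin n → σ → R) : MvPolynomial σ R :=
  (monomialMatrix e (Fin.snoc (fun j t => C (x j t)) X)).det

namespace extensionPolynomial

variable {R σ : Type*} [CommRing R] [Fintype σ] {n : ℕ} (e : Fin (n + 1) → σ → ℕ)
  (x : Fin n → σ → R)

theorem eval_eq (s : σ → R) :
    eval s (extensionPolynomial e x) = (monomialMatrix e (Fin.snoc x s)).det := by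
  rw [extensionPolynomial, RingHom.map_det, RingHom.mapMatrix_apply, monomialMatrix_map]
  congr 2
  ext j t
  induction j using Fin.lastCases <;> simp

theorem eq_sum_monomial :
    extensionPolynomial e x = ∑ i, monomial (Finsupp.equivFunOnFinite.symm (e i))
      ((-1) ^ (i + n : ℕ) * (monomialMatrix (e ∘ i.succAbove) x).det) := by
  rw [extensionPolynomial, Matrix.det_succ_column _ (Fin.last n)]
  refine Finset.sum_congr rfl fun i _ => ?_
  have hminor : (monomialMatrix e (Fin.snoc (fun j t => C (x j t)) X)).submatrix i.succAbove
      (Fin.last n).succAbove = (monomialMatrix (e ∘ i.succAbove) x).map C := by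
    ext k j
    simp [monomialMatrix]
  have hentry : monomialMatrix e (Fin.snoc (fun j t => C (x j t)) X) i (Fin.last n)
      = monomial (Finsupp.equivFunOnFinite.symm (e i)) (1 : R) := by
    simp [monomialMatrix, prod_X_pow_eq_monomial_equivFunOnFinite]
  rw [hminor, hentry, ← RingHom.mapMatrix_apply, ← RingHom.map_det, Fin.val_last]
  simp only [monomial_eq, map_mul, map_pow, map_neg, map_one]
  ring

variable {e}

theorem coeff_last (he : Function.Injective e) :
    (extensionPolynomial e x).coeff (Finsupp.equivFunOnFinite.symm (e (Fin.last n)))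
      = (monomialMatrix (e ∘ Fin.castSucc) x).det := by
  classical
  rw [eq_sum_monomial, coeff_sum, Finset.sum_eq_single (Fin.last n)]
  · rw [coeff_monomial, if_pos rfl, Fin.val_last, (Even.add_self n).neg_one_pow, one_mul,
      Fin.succAbove_last]
  · intro i _ hi
    rw [coeff_monomial, if_neg]
    exact fun h => hi (he (Finsupp.equivFunOnFinite.symm.injective h))
  · exact fun h => absurd (Finset.mem_univ _) h

theorem totalDegree_le {m : ℕ} (hdeg : ∀ i, ∑ t, e i t ≤ m) :
    (extensionPolynomial e x).totalDegree ≤ m := by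
  rw [eq_sum_monomial]
  refine (totalDegree_finsetSum _ _).trans (Finset.sup_le fun i _ => ?_)
  refine (totalDegree_monomial_le _ _).trans ?_
  rw [Finsupp.sum_fintype _ _ fun _ => rfl]
  exact hdeg i

end extensionPolynomial

theorem exists_mem_det_monomialMatrix_snoc_ne_zero {R σ : Type*} [CommRing R] [IsDomain R]
    [Fintype σ] {n : ℕ} {e : Fin (n + 1) → σ → ℕ} (he : Function.Injective e)
    (hdeg : ∀ i, ∑ t, e i t ≤ ∑ t, e (Fin.last n) t) {x : Fin n → σ → R}
    (hx : (monomialMatrix (e ∘ Fin.castSucc) x).det ≠ 0) (S : σ → Finset R)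
    (hS : ∀ t, e (Fin.last n) t < #(S t)) :
    ∃ s : σ → R, (∀ t, s t ∈ S t) ∧ (monomialMatrix e (Fin.snoc x s)).det ≠ 0 := by
  set d := Finsupp.equivFunOnFinite.symm (e (Fin.last n))
  have hcoeff : (extensionPolynomial e x).coeff d ≠ 0 := by
    rwa [extensionPolynomial.coeff_last x he]
  have hdegree : (extensionPolynomial e x).totalDegree = d.degree := by
    refine le_antisymm ?_ ?_
    · rw [Finsupp.degree_eq_sum]
      exact extensionPolynomial.totalDegree_le x hdeg
    · exact le_totalDegree (mem_support_iff.mpr hcoeff)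
  obtain ⟨s, hsS, hs⟩ :=
    combinatorial_nullstellensatz_exists_eval_nonzero _ d hcoeff hdegree S hS
  exact ⟨s, hsS, extensionPolynomial.eval_eq e x s ▸ hs⟩

/-- One step of the matrix-extension argument: given ℓ−1 = L points ν₁,…,ν_L making the
truncated L×L monomial matrix invertible, the Combinatorial Nullstellensatz yields a point
ν_{L+1} with coordinates in {1,…,δ_{ℓ,i}h_i+1} making the (L+1)×(L+1) matrix invertible. -/
theorem stmt16 (L r m : ℕ) (h : Fin r → ℕ) (hh : ∀ t, 1 ≤ h t)
    (δ : Fin (L + 1) → Fin r → ℕ) (hδ : Function.Injective δ)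
    (hdeg : ∀ j, ∑ t, δ j t * h t = m)
    (ν : Fin L → Fin r → ℕ)
    (hM : (Matrix.of fun i j : Fin L =>
        ∏ t, (ν j t : ℚ) ^ (δ i.castSucc t * h t)).det ≠ 0) :
    ∃ νL : Fin r → ℕ,
      (∀ t, 1 ≤ νL t ∧ νL t ≤ δ (Fin.last L) t * h t + 1) ∧
      (Matrix.of fun i j : Fin (L + 1) =>
          ∏ t, ((Fin.snoc ν νL : Fin (L + 1) → Fin r → ℕ) j t : ℚ) ^ (δ i t * h t)).det
        ≠ 0 := by
  set e : Fin (L + 1) → Fin r → ℕ := fun i t => δ i t * h t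
  have he : Function.Injective e := fun i j hij => hδ <| funext fun t =>
    Nat.eq_of_mul_eq_mul_right (hh t) (congrFun hij t)
  let S t : Finset ℚ := (Finset.Icc 1 (e (Fin.last L) t + 1)).image (Nat.cast)
  have hS t : e (Fin.last L) t < #(S t) := by
    rw [Finset.card_image_of_injective _ Nat.cast_injective, Nat.card_Icc]
    omega
  obtain ⟨s, hsS, hs⟩ := exists_mem_det_monomialMatrix_snoc_ne_zero he
    (fun i => ((hdeg i).trans (hdeg _).symm).le) hM S hS
  choose νL hνL hνLs using fun t => Finset.mem_image.mp (hsS t)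
  refine ⟨νL, fun t => Finset.mem_Icc.mp (hνL t), ?_⟩
  have : s = fun t => (νL t : ℚ) := funext fun t => (hνLs t).symm
  subst this
  have hcast : Fin.snoc (fun j t => (ν j t : ℚ)) (fun t => (νL t : ℚ))
      = fun j t => ((Fin.snoc ν νL : Fin (L + 1) → Fin r → ℕ) j t : ℚ) :=
    (Fin.comp_snoc (fun (p : Fin r → ℕ) t => (p t : ℚ)) ν νL).symm
  rwa [monomialMatrix, hcast] at hs
end

section
/- Let h ∈ ℕ^r with positive entries and m ∈ ℕ, and let γ₁, …, γ_k be an enumeration of all γ ∈ ℤ_{≥0}^r with γ·h = m. Then there exist vectors ν₁, …, ν_k ∈ ℕ^r (with positive integer entries) such that the k×k matrix M with entries M_{ij} = ν_i^{γ_j∘h} := Π_{t=1}^r ν_{i,t}^{γ_{j,t}h_t} is invertible over ℚ. -/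
/-!
Kronecker substitution `ν i t = x i ^ (m + 1) ^ t` turns the entry `ν_i ^ (γ_j ∘ h)` into
`x i ^ e j`, where `e j` is the number with base-`(m + 1)` digits `γ j t * h t`; these digits are
at most `m`, so distinct `γ j` give distinct `e j`. It remains to find positive integers `x i`
at which the generalized Vandermonde determinant `det (x i ^ e j)` does not vanish. As a
polynomial in the `x i` it is nonzero, since the diagonal monomial `∏ i, X i ^ e i` comes from
the identity permutation only, so the Combinatorial Nullstellensatz provides such a point.
-/

open Finset MvPolynomial

lemma eq_of_sum_mul_pow_eq {r B : ℕ} {d d' : Fin r → ℕ} (hd : ∀ t, d t < B)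
    (hd' : ∀ t, d' t < B)
    (h : ∑ t, d t * B ^ (t : ℕ) = ∑ t, d' t * B ^ (t : ℕ)) : d = d' := by
  have hdigits : (fun t => (⟨d t, hd t⟩ : Fin B)) = fun t => ⟨d' t, hd' t⟩ :=
    finFunctionFinEquiv.injective (Fin.ext h)
  funext t
  exact congrArg Fin.val (congrFun hdigits t)

lemma injective_sum_mul_pow {ι : Type*} {r B : ℕ} {c : ι → Fin r → ℕ}
    (hc : Function.Injective c) (hB : ∀ j t, c j t < B) :
    Function.Injective fun j => ∑ t, c j t * B ^ (t : ℕ) :=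
  fun _ _ h => hc (eq_of_sum_mul_pow_eq (hB _) (hB _) h)

lemma prod_pow_pow_eq_pow_sum {M : Type*} [CommMonoid M] {r : ℕ} (a : M) (B : ℕ)
    (c : Fin r → ℕ) :
    ∏ t : Fin r, (a ^ B ^ (t : ℕ)) ^ c t = a ^ ∑ t : Fin r, c t * B ^ (t : ℕ) := by
  simp only [← pow_mul, prod_pow_eq_pow_sum, mul_comm (c _)]

namespace MvPolynomial

variable {R σ : Type*} [CommRing R]

lemma prod_X_pow_eq_monomial_equivFunOnFinite [Fintype σ] (f : σ → ℕ) :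
    ∏ i, (X i : MvPolynomial σ R) ^ f i = monomial (Finsupp.equivFunOnFinite.symm f) 1 := by
  rw [prod_X_pow f univ]
  congr
  ext i
  simp [Finsupp.indicator]

lemma det_X_pow_ne_zero [Nontrivial R] [Fintype σ] [DecidableEq σ] {e : σ → ℕ}
    (he : Function.Injective e) :
    (Matrix.of fun i j => (X i : MvPolynomial σ R) ^ e j).det ≠ 0 := by
  have hterm (τ : Equiv.Perm σ) : ∏ i, (X (τ i) : MvPolynomial σ R) ^ e i =
      monomial (Finsupp.equivFunOnFinite.symm (e ∘ τ.symm)) 1 := by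
    rw [← prod_X_pow_eq_monomial_equivFunOnFinite]
    exact Fintype.prod_equiv τ _ _ fun i => by simp
  have hcoeff : coeff (Finsupp.equivFunOnFinite.symm e)
      (Matrix.of fun i j => (X i : MvPolynomial σ R) ^ e j).det = 1 := by
    rw [Matrix.det_apply, coeff_sum, sum_eq_single 1]
    · simp [prod_X_pow_eq_monomial_equivFunOnFinite]
    · intro τ _ hτ
      have : e ∘ τ.symm ≠ e := fun h => hτ (Equiv.Perm.ext fun i => he <| by
        simpa using (congrFun h (τ i)).symm)
      simp only [Matrix.of_apply, hterm, coeff_smul, coeff_monomial,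
        EmbeddingLike.apply_eq_iff_eq, if_neg this, smul_zero]
    · simp
  intro h0
  simp [h0] at hcoeff

lemma exists_eval_natCast_ne_zero [IsDomain R] [CharZero R] [Finite σ]
    {P : MvPolynomial σ R} (hP : P ≠ 0) :
    ∃ x : σ → ℕ, (∀ i, 1 ≤ x i) ∧ eval (fun i => (x i : R)) P ≠ 0 := by
  by_contra! hvanish
  set S : Finset R := (Icc 1 (P.totalDegree + 1)).map Nat.castEmbedding
  refine hP (eq_zero_of_eval_zero_at_prod_finset P (fun _ => S) (fun i => ?_) fun y hy => ?_)
  · rw [card_map, Nat.card_Icc]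
    exact Nat.lt_succ_of_le (degreeOf_le_totalDegree P i)
  · simp only [S, mem_map, mem_Icc, Nat.castEmbedding_apply] at hy
    choose x hx hxy using hy
    rw [← _root_.funext hxy]
    exact hvanish x fun i => (hx i).1

end MvPolynomial

theorem Matrix.exists_det_natCast_pow_ne_zero {R n : Type*} [CommRing R] [IsDomain R] [CharZero R]
    [Fintype n] [DecidableEq n] {e : n → ℕ} (he : Function.Injective e) :
    ∃ x : n → ℕ, (∀ i, 1 ≤ x i) ∧ (Matrix.of fun i j => (x i : R) ^ e j).det ≠ 0 := by
  obtain ⟨x, hx, hdet⟩ := exists_eval_natCast_ne_zero (det_X_pow_ne_zero (R := R) he)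
  refine ⟨x, hx, ?_⟩
  rw [RingHom.map_det] at hdet
  convert hdet using 2
  ext i j
  simp

theorem stmt17_general (r m k : ℕ) (h : Fin r → ℕ) (hh : ∀ t, 1 ≤ h t)
    (γ : Fin k → Fin r → ℕ) (hinj : Function.Injective γ)
    (hsol : ∀ j, ∑ t, γ j t * h t = m) :
    ∃ ν : Fin k → Fin r → ℕ, (∀ i t, 1 ≤ ν i t) ∧
      (Matrix.of fun i j : Fin k => ∏ t, (ν i t : ℚ) ^ (γ j t * h t)).det ≠ 0 := by
  set c : Fin k → Fin r → ℕ := fun j t => γ j t * h t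
  have hc : Function.Injective c := fun a b hab => hinj <| _root_.funext fun t =>
    Nat.eq_of_mul_eq_mul_right (hh t) (congrFun hab t)
  have hc_lt : ∀ j t, c j t < m + 1 := fun j t => Nat.lt_succ_of_le <|
    hsol j ▸ single_le_sum (fun t _ => Nat.zero_le (c j t)) (mem_univ t)
  obtain ⟨x, hx, hdet⟩ :=
    Matrix.exists_det_natCast_pow_ne_zero (R := ℚ) (injective_sum_mul_pow hc hc_lt)
  refine ⟨fun i t => x i ^ (m + 1) ^ (t : ℕ), fun i t => Nat.one_le_pow _ _ (hx i), ?_⟩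
  convert hdet using 2
  ext i j
  push_cast
  exact prod_pow_pow_eq_pow_sum (x i : ℚ) (m + 1) (c j)

/-- Given an enumeration γ₁,…,γ_k of all γ ∈ ℤ_{≥0}^r with γ·h = m, there are vectors
ν₁,…,ν_k of positive integers such that the k×k matrix (ν_i^{γ_j∘h})_{ij} is invertible. -/
theorem stmt17 (r m k : ℕ) (h : Fin r → ℕ) (hh : ∀ t, 1 ≤ h t)
    (γ : Fin k → Fin r → ℕ) (hinj : Function.Injective γ)
    (hsol : ∀ j, ∑ t, γ j t * h t = m)
    (hall : ∀ g : Fin r → ℕ, (∑ t, g t * h t = m) → ∃ j, γ j = g) :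
    ∃ ν : Fin k → Fin r → ℕ, (∀ i t, 1 ≤ ν i t) ∧
      (Matrix.of fun i j : Fin k => ∏ t, (ν i t : ℚ) ^ (γ j t * h t)).det ≠ 0 :=
  stmt17_general r m k h hh γ hinj hsol
end
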